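/- arXiv:2304.00937 — 2 statements merged into one kernel-verified Lean document; each statement's English description precedes it below -/
import Mathlib

section
/- For integers n ≥ 1 and r ≥ 0, the graph G = K_{n+r+1} + ((2r+2)K_2) is (n+r+1)-connected, satisfies I(G) = (n+3(r+1))/(2(r+1)) > (n+3(r+2))/(2(r+2)), and is not (P_{≥3},n)-factor critical avoidable. -/
open SimpleGraph

/-- Number of isolated vertices of a graph. -/
noncomputable def isolCount {V : Type*} (G : SimpleGraph V) : ℕ :=
  Nat.card {v : V // ∀ w, ¬ G.Adj v w}

/-- Number of connected components of a graph. -/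
noncomputable def compCount {V : Type*} (G : SimpleGraph V) : ℕ :=
  Nat.card G.ConnectedComponent

/-- Number of vertices of degree exactly one. -/
noncomputable def deg1Count {V : Type*} (G : SimpleGraph V) : ℕ :=
  Nat.card {v : V // Nat.card {w : V // G.Adj v w} = 1}

/-- A graph is factor-critical if deleting any vertex leaves a graph with a perfect matching. -/
def IsFactorCritical {V : Type*} (G : SimpleGraph V) : Prop :=
  ∀ v : V, ∃ M : (G.induce ({v}ᶜ : Set V)).Subgraph, M.IsPerfectMatching

/-- `G` is the corona of the factor-critical graph induced on `S` (with `3 ≤ |S|`):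
every vertex outside `S` is a pendant vertex attached to its own vertex of `S`. -/
def IsCoronaOfFactorCritical {V : Type*} (G : SimpleGraph V) (S : Set V) : Prop :=
  3 ≤ Nat.card S ∧ IsFactorCritical (G.induce S) ∧
  ∃ z : S ≃ ↥(Sᶜ), ∀ (y : S) (w : V), G.Adj ((z y : ↥(Sᶜ)) : V) w ↔ w = (y : V)

/-- A sun is `K₁`, `K₂`, or the corona of a factor-critical graph with at least 3 vertices. -/
def IsSunGraph {V : Type*} (G : SimpleGraph V) : Prop :=
  Nat.card V = 1 ∨ (Nat.card V = 2 ∧ G.Connected) ∨ ∃ S : Set V, IsCoronaOfFactorCritical G S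

/-- The number of sun components of a graph. -/
noncomputable def sunCount {V : Type*} (G : SimpleGraph V) : ℕ :=
  Nat.card {C : G.ConnectedComponent // IsSunGraph (G.induce C.supp)}

/-- `G` has a `P_{≥k}`-factor: a spanning subgraph all of whose components are paths
of order at least `k`. -/
def HasPathFactor {V : Type*} (G : SimpleGraph V) (k : ℕ) : Prop :=
  ∃ F : SimpleGraph V, F ≤ G ∧ ∀ C : F.ConnectedComponent,
    ∃ m : ℕ, k ≤ m ∧ Nonempty ((F.induce C.supp) ≃g pathGraph m)

/-- Vertex `k`-connectivity: more than `k` vertices, and removing fewer than `k`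
vertices leaves a connected graph. -/
def IsKConnected {V : Type*} (G : SimpleGraph V) (k : ℕ) : Prop :=
  k < Nat.card V ∧ ∀ S : Set V, Nat.card S < k → (G.induce (Sᶜ : Set V)).Connected

/-- The toughness of a graph, valued in `ℝ≥0∞` (infimum over the empty set is `∞`,
which covers complete graphs). -/
noncomputable def toughness {V : Type*} (G : SimpleGraph V) : ENNReal :=
  ⨅ X : {X : Set V // 2 ≤ compCount (G.induce (Xᶜ : Set V))},
    (Nat.card X.1 : ENNReal) / (compCount (G.induce ((X.1)ᶜ : Set V)) : ENNReal)

/-- The isolated toughness of a graph, valued in `ℝ≥0∞`. -/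
noncomputable def isolatedToughness {V : Type*} (G : SimpleGraph V) : ENNReal :=
  ⨅ X : {X : Set V // 2 ≤ isolCount (G.induce (Xᶜ : Set V))},
    (Nat.card X.1 : ENNReal) / (isolCount (G.induce ((X.1)ᶜ : Set V)) : ENNReal)

/-- `G` is `(P_{≥k}, n)`-factor critical avoidable: for every vertex set `W` of size `n`
and every edge `e` of `G − W`, the graph `G − W − e` has a `P_{≥k}`-factor. -/
def PathFactorCriticalAvoidable {V : Type*} (G : SimpleGraph V) (k n : ℕ) : Prop :=
  ∀ W : Set V, Nat.card W = n → ∀ e ∈ (G.induce (Wᶜ : Set V)).edgeSet,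
    HasPathFactor ((G.induce (Wᶜ : Set V)).deleteEdges {e}) k

/-- The join of two graphs: all edges between the two sides. -/
def graphJoin {α β : Type*} (G : SimpleGraph α) (H : SimpleGraph β) :
    SimpleGraph (α ⊕ β) where
  Adj x y :=
    match x, y with
    | Sum.inl a, Sum.inl b => G.Adj a b
    | Sum.inr a, Sum.inr b => H.Adj a b
    | _, _ => True
  symm := ⟨by rintro (a|a) (b|b) h <;> simp_all <;> exact h.symm⟩
  loopless := ⟨by rintro (a|a) h <;> simp_all⟩

/-- The disjoint union of two graphs. -/
def disjUnion {α β : Type*} (G : SimpleGraph α) (H : SimpleGraph β) :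
    SimpleGraph (α ⊕ β) where
  Adj x y :=
    match x, y with
    | Sum.inl a, Sum.inl b => G.Adj a b
    | Sum.inr a, Sum.inr b => H.Adj a b
    | _, _ => False
  symm := ⟨by rintro (a|a) (b|b) h <;> simp_all <;> exact h.symm⟩
  loopless := ⟨by rintro (a|a) h <;> simp_all⟩

/-- `b` disjoint copies of `K₂`. -/
def copiesK2 (b : ℕ) : SimpleGraph (Fin b × Fin 2) where
  Adj x y := x.1 = y.1 ∧ x.2 ≠ y.2
  symm := ⟨by rintro x y ⟨h1, h2⟩; exact ⟨h1.symm, h2.symm⟩⟩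
  loopless := ⟨by rintro x ⟨h1, h2⟩; exact h2 rfl⟩

/-!
Deleting fewer than `n + r + 1` vertices leaves a clique vertex, and it is adjacent to every
other vertex. If deleting `X` leaves `k ≥ 2` isolated vertices, then `X` contains the whole
clique and the partner of every isolated vertex, and the isolated vertices lie in distinct
copies of `K₂`; so `|X| ≥ n + r + 1 + k` with `k ≤ 2r + 2`, and the clique together with one end
of every `K₂` attains the bound. Finally delete `n` clique vertices and the edge `uv` of one
`K₂`. In a `P_{≥3}`-factor of the rest, every `K₂` sends an edge to the `r + 1` surviving clique
vertices and `u`, `v` send one each, so `2r + 3` factor edges end in the surviving clique,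
whose vertices have factor degree at most `2`.
-/

open Finset

lemma natCast_div_le_natCast_div_iff {a b c d : ℕ} (hb : b ≠ 0) (hd : d ≠ 0) :
    (a : ENNReal) / b ≤ c / d ↔ a * d ≤ c * b := by
  have hcoe : ∀ x y : ℕ, y ≠ 0 → (x : ENNReal) / y = ((x / y : NNReal) : ENNReal) :=
    fun x y hy ↦ by rw [ENNReal.coe_div (by exact_mod_cast hy)]; rfl
  rw [hcoe a b hb, hcoe c d hd, ENNReal.coe_le_coe, div_le_div_iff₀ (by positivity) (by positivity)]
  norm_cast

lemma natCast_div_lt_natCast_div_iff {a b c d : ℕ} (hb : b ≠ 0) (hd : d ≠ 0) :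
    (a : ENNReal) / b < c / d ↔ a * d < c * b := by
  rw [← not_le, natCast_div_le_natCast_div_iff hd hb, not_le]

lemma fin_two_ne_add_one : ∀ i : Fin 2, i ≠ i + 1 := by decide

lemma connected_of_forall_adj {V : Type*} {G : SimpleGraph V} (v : V)
    (hv : ∀ w, w ≠ v → G.Adj v w) : G.Connected := by
  have hreach : ∀ w, G.Reachable v w := fun w ↦ by
    by_cases hw : w = v
    · subst hw; rfl
    · exact (hv w hw).reachable
  have : Nonempty V := ⟨v⟩
  exact ⟨fun u w ↦ (hreach u).symm.trans (hreach w)⟩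

lemma pathGraph_degree_le_two {m : ℕ} (j : Fin m) [Fintype ((pathGraph m).neighborSet j)] :
    (pathGraph m).degree j ≤ 2 := by
  rw [← card_neighborFinset_eq_degree]
  calc #((pathGraph m).neighborFinset j) ≤ #({j.val - 1, j.val + 1} : Finset ℕ) := by
        refine card_le_card_of_injOn Fin.val (fun x hx ↦ ?_) Fin.val_injective.injOn
        simp only [coe_neighborFinset, mem_neighborSet, pathGraph_adj] at hx
        simp only [coe_insert, coe_singleton, Set.mem_insert_iff, Set.mem_singleton_iff]
        omega
    _ ≤ 2 := card_le_two

lemma card_le_mul_card_of_forall_exists_adj {V : Type*} [Fintype V] [DecidableEq V]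
    {G : SimpleGraph V} [DecidableRel G.Adj] {d : ℕ} {s t : Finset V}
    (hd : ∀ u ∈ s, G.degree u ≤ d) (ht : ∀ v ∈ t, ∃ u ∈ s, G.Adj u v) : #t ≤ d * #s :=
  calc #t ≤ #(s.biUnion fun u ↦ G.neighborFinset u) := card_le_card fun v hv ↦ by
        obtain ⟨u, hu, huv⟩ := ht v hv
        exact mem_biUnion.2 ⟨u, hu, (mem_neighborFinset G u v).2 huv⟩
    _ ≤ ∑ u ∈ s, #(G.neighborFinset u) := card_biUnion_le
    _ ≤ ∑ _u ∈ s, d :=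
        sum_le_sum fun u hu ↦ (card_neighborFinset_eq_degree G u).trans_le (hd u hu)
    _ = d * #s := by rw [sum_const, smul_eq_mul, mul_comm]

def ComponentsArePaths {V : Type*} (F : SimpleGraph V) (k : ℕ) : Prop :=
  ∀ C : F.ConnectedComponent, ∃ m : ℕ, k ≤ m ∧ Nonempty ((F.induce C.supp) ≃g pathGraph m)

namespace ComponentsArePaths

variable {V : Type*} {F : SimpleGraph V} {k : ℕ}

lemma degree_le_two [Fintype V] [DecidableRel F.Adj] (hF : ComponentsArePaths F k) (v : V) :
    F.degree v ≤ 2 := by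
  classical
  obtain ⟨m, -, ⟨φ⟩⟩ := hF (F.connectedComponentMk v)
  have hv : v ∈ (F.connectedComponentMk v).supp := rfl
  have hnbr : F.neighborSet v ⊆ (F.connectedComponentMk v).supp := fun w hw ↦
    ConnectedComponent.mem_supp_of_adj_mem_supp _ hv hw
  rw [← degree_induce_of_neighborSet_subset (v := ⟨v, hv⟩) hnbr, ← φ.degree_eq]
  exact pathGraph_degree_le_two _

lemma exists_adj_not_mem [Finite V] (hF : ComponentsArePaths F k) {s : Finset V} {v : V}
    (hv : v ∈ s) (hs : #s < k) : ∃ x ∈ s, ∃ y ∉ s, F.Adj x y := by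
  obtain ⟨m, hkm, ⟨φ⟩⟩ := hF (F.connectedComponentMk v)
  by_contra! hclosed
  have hsupp : (F.connectedComponentMk v).supp ⊆ s := fun w hw ↦ by
    by_contra hws
    obtain ⟨p⟩ := (ConnectedComponent.exact hw).symm
    obtain ⟨d, -, hd₁, hd₂⟩ := p.exists_boundary_dart _ hv hws
    exact hclosed _ hd₁ _ hd₂ d.adj
  have hcard : Nat.card (F.connectedComponentMk v).supp = m := by
    simpa using Nat.card_congr φ.toEquiv
  have : m ≤ #s := hcard ▸ (Nat.card_mono s.finite_toSet hsupp).trans_eq (by simp)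
  omega

end ComponentsArePaths

section GraphJoin

variable {α β : Type*}

@[simp]
lemma graphJoin_top_adj_inl {H : SimpleGraph β} {a : α} {v : α ⊕ β} :
    (graphJoin ⊤ H).Adj (Sum.inl a) v ↔ v ≠ Sum.inl a := by
  rcases v with a' | p
  · simp [graphJoin, eq_comm]
  · simp [graphJoin]

theorem isKConnected_graphJoin_top [Fintype α] [Finite β] [Nonempty β] (H : SimpleGraph β) :
    IsKConnected (graphJoin (⊤ : SimpleGraph α) H) (Fintype.card α) := by
  refine ⟨by simp [Nat.card_sum, Nat.card_pos], fun S hS ↦ ?_⟩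
  obtain ⟨a, ha⟩ : ∃ a, Sum.inl a ∉ S := by
    by_contra! hall
    have := Nat.card_le_card_of_injective (fun a ↦ (⟨Sum.inl a, hall a⟩ : S))
      fun a a' h ↦ Sum.inl_injective (congrArg Subtype.val h)
    rw [Nat.card_eq_fintype_card] at this
    exact hS.not_ge this
  refine connected_of_forall_adj ⟨Sum.inl a, ha⟩ fun w hw ↦ ?_
  simpa [Subtype.ext_iff] using hw

end GraphJoin

section IsolatedOutside

variable {α β : Type*} {X : Set (α ⊕ β)}

abbrev IsolatedOutside (G : SimpleGraph (α ⊕ β)) (X : Set (α ⊕ β)) : Type _ :=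
  {v : ↥Xᶜ // ∀ w, ¬ (G.induce Xᶜ).Adj v w}

lemma isolCount_induce_compl (G : SimpleGraph (α ⊕ β)) (X : Set (α ⊕ β)) :
    isolCount (G.induce Xᶜ) = Nat.card (IsolatedOutside G X) := rfl

lemma exists_eq_inr_of_two_le_isolCount {H : SimpleGraph β}
    (hk : 2 ≤ isolCount ((graphJoin (⊤ : SimpleGraph α) H).induce Xᶜ))
    (u : IsolatedOutside (graphJoin ⊤ H) X) : ∃ p, u.1.1 = Sum.inr p := by
  rw [isolCount_induce_compl] at hk
  have : Finite (IsolatedOutside (graphJoin ⊤ H) X) := Nat.finite_of_card_ne_zero (by omega)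
  have : Nontrivial (IsolatedOutside (graphJoin ⊤ H) X) :=
    Finite.one_lt_card_iff_nontrivial.mp hk
  obtain ⟨w, hw⟩ := exists_ne u
  rcases hu : u.1.1 with a | p
  · refine absurd ?_ (u.2 w.1)
    change (graphJoin ⊤ H).Adj u.1.1 w.1.1
    rw [hu, graphJoin_top_adj_inl, ← hu]
    exact fun h ↦ hw (Subtype.ext (Subtype.ext h))
  · exact ⟨p, rfl⟩

end IsolatedOutside

section IsolatedToughness

variable {α : Type*} {b : ℕ} {X : Set (α ⊕ (Fin b × Fin 2))}

lemma isolCount_le_of_two_le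
    (hk : 2 ≤ isolCount ((graphJoin (⊤ : SimpleGraph α) (copiesK2 b)).induce Xᶜ)) :
    isolCount ((graphJoin (⊤ : SimpleGraph α) (copiesK2 b)).induce Xᶜ) ≤ b := by
  choose p hp using exists_eq_inr_of_two_le_isolCount hk
  rw [isolCount_induce_compl] at hk ⊢
  have hinj : Function.Injective fun u ↦ (p u).1 := by
    intro u w hc
    by_contra hne
    have hi : (p u).2 ≠ (p w).2 := fun hi ↦
      hne (Subtype.ext (Subtype.ext (by rw [hp, hp, Prod.ext hc hi])))
    refine u.2 w.1 ?_
    change (graphJoin ⊤ (copiesK2 b)).Adj u.1.1 w.1.1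
    rw [hp, hp]
    exact ⟨hc, hi⟩
  simpa using Nat.card_le_card_of_injective _ hinj

lemma card_add_isolCount_le [Fintype α]
    (hk : 2 ≤ isolCount ((graphJoin (⊤ : SimpleGraph α) (copiesK2 b)).induce Xᶜ)) :
    Fintype.card α + isolCount ((graphJoin (⊤ : SimpleGraph α) (copiesK2 b)).induce Xᶜ) ≤
      Nat.card X := by
  choose p hp using exists_eq_inr_of_two_le_isolCount hk
  rw [isolCount_induce_compl] at hk ⊢
  obtain ⟨u₀⟩ : Nonempty (IsolatedOutside (graphJoin ⊤ (copiesK2 b)) X) :=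
    Nat.card_pos_iff.mp (by omega) |>.1
  have hleft : ∀ a, Sum.inl a ∈ X := fun a ↦ by
    by_contra h
    refine u₀.2 ⟨_, h⟩ ?_
    change (graphJoin ⊤ (copiesK2 b)).Adj u₀.1.1 _
    rw [hp]
    trivial
  have hpartner : ∀ u, Sum.inr ((p u).1, (p u).2 + 1) ∈ X := fun u ↦ by
    by_contra h
    refine u.2 ⟨_, h⟩ ?_
    change (graphJoin ⊤ (copiesK2 b)).Adj u.1.1 _
    rw [hp]
    exact ⟨rfl, fin_two_ne_add_one _⟩
  have hinj :
      Function.Injective (Sum.elim (fun a ↦ (⟨_, hleft a⟩ : X)) fun u ↦ ⟨_, hpartner u⟩) := by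
    rintro (a | u) (a' | u') h <;> simp only [Sum.elim_inl, Sum.elim_inr, Subtype.mk.injEq,
      Sum.inl.injEq, Sum.inr.injEq, reduceCtorEq, Prod.mk.injEq, add_left_inj] at h
    · rw [h]
    · have huu' : u.1.1 = u'.1.1 := by rw [hp, hp, Prod.ext h.1 h.2]
      rw [Subtype.ext (Subtype.ext huu')]
  simpa [Nat.card_sum] using Nat.card_le_card_of_injective _ hinj

theorem isolatedToughness_graphJoin_top_copiesK2 [Fintype α] (hb : 2 ≤ b) :
    isolatedToughness (graphJoin (⊤ : SimpleGraph α) (copiesK2 b)) =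
      ((Fintype.card α + b : ℕ) : ENNReal) / (b : ℕ) := by
  have hinj : Function.Injective fun c : Fin b ↦ (Sum.inr (c, 1) : α ⊕ (Fin b × Fin 2)) :=
    fun c c' h ↦ congrArg Prod.fst (Sum.inr_injective h)
  set X₀ := (Set.range fun c : Fin b ↦ (Sum.inr (c, 1) : α ⊕ (Fin b × Fin 2)))ᶜ
  have hcompl : Nat.card ↥X₀ᶜ = b := by
    rw [compl_compl, Nat.card_range_of_injective hinj, Nat.card_fin]
  have hisol : isolCount ((graphJoin (⊤ : SimpleGraph α) (copiesK2 b)).induce X₀ᶜ) = b := by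
    have hall : ∀ v w : ↥X₀ᶜ, ¬ ((graphJoin ⊤ (copiesK2 b)).induce X₀ᶜ).Adj v w := by
      rintro ⟨v, hv⟩ ⟨w, hw⟩
      rw [compl_compl] at hv hw
      obtain ⟨c, rfl⟩ := hv
      obtain ⟨d, rfl⟩ := hw
      exact fun h ↦ h.2 rfl
    rw [isolCount_induce_compl, Nat.card_congr (Equiv.subtypeUnivEquiv (hall ·)), hcompl]
  have hcard : Nat.card X₀ = Fintype.card α + b := by
    have := Set.ncard_compl_add_ncard X₀
    simp only [Nat.card_coe_set_eq] at hcompl ⊢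
    simp at this
    omega
  refine le_antisymm (iInf_le_of_le ⟨X₀, hisol.symm ▸ hb⟩ ?_) (le_iInf fun X ↦ ?_)
  · rw [hcard, hisol]
  · have hk := X.2
    rw [natCast_div_le_natCast_div_iff (by omega) (by omega)]
    nlinarith [card_add_isolCount_le hk, isolCount_le_of_two_le hk]

end IsolatedToughness

section Avoidable

variable {α : Type*} {b : ℕ}

lemma graphJoin_top_copiesK2_adj_inr {p : Fin b × Fin 2} {v : α ⊕ (Fin b × Fin 2)}
    (h : (graphJoin (⊤ : SimpleGraph α) (copiesK2 b)).Adj (Sum.inr p) v) :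
    (∃ a, v = Sum.inl a) ∨ ∃ j, v = Sum.inr (p.1, j) := by
  rcases v with a | q
  · exact Or.inl ⟨a, rfl⟩
  · exact Or.inr ⟨q.2, by rw [show p.1 = q.1 from h.1]⟩

variable [Finite α] {W : Set (α ⊕ (Fin b × Fin 2))} (hW : ∀ p, Sum.inr p ∉ W)
  {F : SimpleGraph ↥Wᶜ} (hFJ : F ≤ (graphJoin (⊤ : SimpleGraph α) (copiesK2 b)).induce Wᶜ)
  (hF : ComponentsArePaths F 3)
include hW hFJ hF

lemma exists_inl_adj_of_copy (c : Fin b) :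
    ∃ i, ∃ y : ↥Wᶜ, (∃ a, y.1 = Sum.inl a) ∧ F.Adj y ⟨Sum.inr (c, i), hW _⟩ := by
  classical
  obtain ⟨x, hx, y, hy, hxy⟩ := hF.exists_adj_not_mem
    (s := {⟨Sum.inr (c, 0), hW _⟩, ⟨Sum.inr (c, 1), hW _⟩}) (mem_insert_self _ _)
    (card_le_two.trans_lt (by norm_num))
  obtain ⟨i, rfl⟩ : ∃ i, x = ⟨Sum.inr (c, i), hW _⟩ := by
    rcases mem_insert.mp hx with rfl | hx
    exacts [⟨0, rfl⟩, ⟨1, mem_singleton.mp hx⟩]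
  rcases graphJoin_top_copiesK2_adj_inr (hFJ hxy) with ⟨a, ha⟩ | ⟨j, hj⟩
  · exact ⟨i, y, ⟨a, ha⟩, hxy.symm⟩
  · obtain rfl : y = ⟨Sum.inr (c, j), hW _⟩ := Subtype.ext hj
    fin_cases j <;> simp at hy

lemma exists_inl_adj_of_forall_not_adj_copy (p : Fin b × Fin 2)
    (hp : ∀ j, ¬ F.Adj ⟨Sum.inr p, hW _⟩ ⟨Sum.inr (p.1, j), hW _⟩) :
    ∃ y : ↥Wᶜ, (∃ a, y.1 = Sum.inl a) ∧ F.Adj y ⟨Sum.inr p, hW _⟩ := by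
  classical
  obtain ⟨x, hx, y, -, hxy⟩ := hF.exists_adj_not_mem (s := {⟨Sum.inr p, hW _⟩})
    (mem_singleton_self _) (by simp)
  obtain rfl := mem_singleton.mp hx
  rcases graphJoin_top_copiesK2_adj_inr (hFJ hxy) with ⟨a, ha⟩ | ⟨j, hj⟩
  · exact ⟨y, ⟨a, ha⟩, hxy.symm⟩
  · obtain rfl : y = ⟨Sum.inr (p.1, j), hW _⟩ := Subtype.ext hj
    exact absurd hxy (hp j)

end Avoidable

theorem not_pathFactorCriticalAvoidable_graphJoin_top_copiesK2 {α : Type*} [Fintype α] {n b : ℕ}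
    (hn : n ≤ Fintype.card α) (hb : 0 < b) (hαb : 2 * (Fintype.card α - n) ≤ b) :
    ¬ PathFactorCriticalAvoidable (graphJoin (⊤ : SimpleGraph α) (copiesK2 b)) 3 n := by
  classical
  intro hP
  obtain ⟨A, -, hA⟩ := exists_subset_card_eq (s := (univ : Finset α)) (by simpa using hn)
  set W : Set (α ⊕ (Fin b × Fin 2)) := Sum.inl '' A
  have hW : ∀ p, Sum.inr p ∉ W := by simp [W]
  let v (p : Fin b × Fin 2) : ↥Wᶜ := ⟨Sum.inr p, hW p⟩
  let c₀ : Fin b := ⟨0, hb⟩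
  obtain ⟨F, hFle, hF : ComponentsArePaths F 3⟩ := hP W
    (by simp [W, card_image_of_injective _ Sum.inl_injective, hA])
    s(v (c₀, 0), v (c₀, 1)) ⟨rfl, zero_ne_one⟩
  have hFJ := hFle.trans (deleteEdges_le _)
  have hc₀ : ∀ i j, ¬ F.Adj (v (c₀, i)) (v (c₀, j)) := by
    intro i j h
    have hne := (deleteEdges_adj.mp (hFle h)).2
    fin_cases i <;> fin_cases j
    exacts [F.loopless.irrefl _ h, hne rfl, hne Sym2.eq_swap, F.loopless.irrefl _ h]
  choose i y hy hyadj using exists_inl_adj_of_copy hW hFJ hF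
  obtain ⟨y', hy', hy'adj⟩ :=
    exists_inl_adj_of_forall_not_adj_copy hW hFJ hF (c₀, i c₀ + 1) (hc₀ _)
  -- one vertex of every copy with a factor neighbour in the clique, and the other end of the
  -- deleted edge
  let f (o : Option (Fin b)) : ↥Wᶜ := o.elim (v (c₀, i c₀ + 1)) fun c ↦ v (c, i c)
  have hf : Function.Injective f := by
    rintro (_ | c) (_ | c') h <;> simp only [f, v, Option.elim, Subtype.mk.injEq,
      Sum.inr.injEq, Prod.mk.injEq] at h
    · rfl
    · obtain ⟨rfl, h⟩ := h; exact absurd h.symm (fin_two_ne_add_one _)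
    · obtain ⟨rfl, h⟩ := h; exact absurd h (fin_two_ne_add_one _)
    · rw [h.1]
  let L : Finset ↥Wᶜ :=
    Aᶜ.attach.image fun a ↦ ⟨Sum.inl a.1, by simpa [W] using mem_compl.mp a.2⟩
  have hL : ∀ y : ↥Wᶜ, (∃ a, y.1 = Sum.inl a) → y ∈ L := by
    rintro ⟨_, hy⟩ ⟨a, rfl⟩
    exact mem_image.mpr ⟨⟨a, mem_compl.mpr (by simpa [W] using hy)⟩, mem_attach _ _, rfl⟩
  have hcount : #(univ.image f) ≤ 2 * #L := by
    refine card_le_mul_card_of_forall_exists_adj (fun u _ ↦ hF.degree_le_two u) ?_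
    rintro _ hv
    obtain ⟨_ | c, -, rfl⟩ := mem_image.mp hv
    exacts [⟨y', hL _ hy', hy'adj⟩, ⟨y c, hL _ (hy c), hyadj c⟩]
  have hLcard : #L ≤ Fintype.card α - n := card_image_le.trans (by simp [card_compl, hA])
  rw [card_image_of_injective _ hf, card_univ, Fintype.card_option, Fintype.card_fin] at hcount
  omega

/-- Remark 6: sharpness of the connectivity condition in Theorem 8. -/
theorem stmt12 (n r : ℕ) (h : 1 ≤ n)
    (G : SimpleGraph (Fin (n + r + 1) ⊕ (Fin (2 * r + 2) × Fin 2)))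
    (hG : G = graphJoin (⊤ : SimpleGraph (Fin (n + r + 1))) (copiesK2 (2 * r + 2))) :
    IsKConnected G (n + r + 1) ∧
    isolatedToughness G = ((n : ENNReal) + 3 * ((r : ENNReal) + 1)) / (2 * ((r : ENNReal) + 1)) ∧
    ((n : ENNReal) + 3 * ((r : ENNReal) + 1)) / (2 * ((r : ENNReal) + 1)) >
      ((n : ENNReal) + 3 * ((r : ENNReal) + 2)) / (2 * ((r : ENNReal) + 2)) ∧
    ¬ PathFactorCriticalAvoidable G 3 n := by
  subst hG
  have hcast : ∀ s : ℕ, ((n : ENNReal) + 3 * ((s : ENNReal) + 1)) / (2 * ((s : ENNReal) + 1)) =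
      ((n + 3 * (s + 1) : ℕ) : ENNReal) / ((2 * (s + 1) : ℕ) : ENNReal) := fun s ↦ by push_cast; rfl
  refine ⟨?_, ?_, ?_, ?_⟩
  · simpa using isKConnected_graphJoin_top (α := Fin (n + r + 1)) (copiesK2 (2 * r + 2))
  · rw [isolatedToughness_graphJoin_top_copiesK2 (by omega), Fintype.card_fin, hcast]
    congr 2; ring
  · rw [hcast, show (r : ENNReal) + 2 = ((r + 1 : ℕ) : ENNReal) + 1 by push_cast; ring, hcast,
      gt_iff_lt, natCast_div_lt_natCast_div_iff (by omega) (by omega)]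
    nlinarith
  · exact not_pathFactorCriticalAvoidable_graphJoin_top_copiesK2
      (by simp; omega) (by omega) (by simp; omega)
end

section
/- Let G be a graph and e an edge of G. Then sun(G−e) + 1 ≥ sun(G) ≥ sun(G−e) − 2, where sun counts the number of sun components. -/
/-!
Deleting the edge `xy` only affects the components of `G` that meet `{x, y}`: a component of
`G - xy` containing neither `x` nor `y` is also a component of `G`, with the same induced subgraph,
and conversely. Since `x` and `y` lie in a single component of `G` and in at most two components
of `G - xy`, the number of components with any given property, such as being a sun, can drop by at
most one and grow by at most two.
-/

open SimpleGraph

theorem Set.ncard_sdiff_le_of_finite {α : Type*} (s : Set α) {t : Set α} (ht : t.Finite) :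
    (s \ t).ncard ≤ s.ncard := by
  by_cases hs : s.Finite
  · exact Set.ncard_le_ncard Set.sdiff_subset hs
  · rw [(Set.Infinite.sdiff hs ht).ncard]
    exact Nat.zero_le _

theorem Set.ncard_pair_le {α : Type*} (a b : α) : ({a, b} : Set α).ncard ≤ 2 := by
  simpa using Set.ncard_insert_le a {b}

namespace SimpleGraph

variable {V : Type*} {G : SimpleGraph V} {x y : V}

theorem Reachable.deleteEdges_or {u v : V} (h : G.Reachable u v) :
    (G.deleteEdges {s(x, y)}).Reachable u v ∨ (G.deleteEdges {s(x, y)}).Reachable u x ∨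
      (G.deleteEdges {s(x, y)}).Reachable u y := by
  obtain ⟨p⟩ := h
  induction p with
  | nil => exact .inl .rfl
  | @cons a c b hac p ih =>
    by_cases hxy : s(a, c) = s(x, y)
    · rcases Sym2.eq_iff.mp hxy with ⟨rfl, -⟩ | ⟨rfl, -⟩
      · exact .inr (.inl .rfl)
      · exact .inr (.inr .rfl)
    · have hac' : (G.deleteEdges {s(x, y)}).Adj a c := (deleteEdges_adj ..).mpr ⟨hac, hxy⟩
      exact ih.imp hac'.reachable.trans (Or.imp hac'.reachable.trans hac'.reachable.trans)

theorem induce_deleteEdges_of_notMem {S : Set V} (hx : x ∉ S) :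
    (G.deleteEdges {s(x, y)}).induce S = G.induce S := by
  ext a b
  simp only [comap_adj, Function.Embedding.coe_subtype, deleteEdges_adj, Set.mem_singleton_iff,
    and_iff_left_iff_imp]
  rintro - h
  rcases Sym2.eq_iff.mp h with ⟨rfl, -⟩ | ⟨-, rfl⟩
  exacts [hx a.2, hx b.2]

namespace ConnectedComponent

theorem notMem_pair_iff {C : G.ConnectedComponent} :
    C ∉ ({G.connectedComponentMk x, G.connectedComponentMk y} : Set _) ↔
      x ∉ C.supp ∧ y ∉ C.supp := by
  simp [mem_supp_iff, eq_comm]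

theorem supp_subset_supp_map_ofLE {H : SimpleGraph V} (h : H ≤ G) (C : H.ConnectedComponent) :
    C.supp ⊆ (C.map (Hom.ofLE h)).supp := by
  intro v hv
  rw [mem_supp_iff] at hv ⊢
  rw [← hv]
  rfl

theorem supp_map_ofLE_deleteEdges {C : (G.deleteEdges {s(x, y)}).ConnectedComponent}
    (hx : x ∉ C.supp) (hy : y ∉ C.supp) :
    (C.map (Hom.ofLE (G.deleteEdges_le _))).supp = C.supp := by
  induction C using ConnectedComponent.ind with | h u => ?_
  ext v
  simp only [map_mk, mem_supp_iff, ConnectedComponent.eq, Hom.ofLE_apply] at hx hy ⊢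
  refine ⟨fun h => ?_, fun h => h.mono (G.deleteEdges_le _)⟩
  rcases h.symm.deleteEdges_or with h | h | h
  exacts [h.symm, (hx h.symm).elim, (hy h.symm).elim]

end ConnectedComponent

def componentsWith (G : SimpleGraph V) (P : ∀ S : Set V, SimpleGraph S → Prop) :
    Set G.ConnectedComponent :=
  {C | P C.supp (G.induce C.supp)}

theorem mem_componentsWith {P : ∀ S : Set V, SimpleGraph S → Prop} {C : G.ConnectedComponent} :
    C ∈ G.componentsWith P ↔ P C.supp (G.induce C.supp) :=
  Iff.rfl

variable (P : ∀ S : Set V, SimpleGraph S → Prop)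

theorem map_ofLE_deleteEdges_mem_componentsWith_iff
    {C : (G.deleteEdges {s(x, y)}).ConnectedComponent} (hx : x ∉ C.supp) (hy : y ∉ C.supp) :
    C.map (Hom.ofLE (G.deleteEdges_le _)) ∈ G.componentsWith P ↔
      C ∈ (G.deleteEdges {s(x, y)}).componentsWith P := by
  rw [mem_componentsWith, mem_componentsWith, ConnectedComponent.supp_map_ofLE_deleteEdges hx hy,
    induce_deleteEdges_of_notMem hx]

theorem ncard_componentsWith_deleteEdges_sdiff :
    ((G.deleteEdges {s(x, y)}).componentsWith P \
        {(G.deleteEdges {s(x, y)}).connectedComponentMk x,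
          (G.deleteEdges {s(x, y)}).connectedComponentMk y}).ncard =
      (G.componentsWith P \ {G.connectedComponentMk x, G.connectedComponentMk y}).ncard := by
  have hsupp := @ConnectedComponent.supp_map_ofLE_deleteEdges _ G x y
  refine Set.ncard_congr (fun C _ => C.map (Hom.ofLE (G.deleteEdges_le _))) ?_ ?_ ?_
  · rintro C ⟨hP, hC⟩
    rw [ConnectedComponent.notMem_pair_iff] at hC
    refine ⟨(map_ofLE_deleteEdges_mem_componentsWith_iff P hC.1 hC.2).mpr hP,
      ConnectedComponent.notMem_pair_iff.mpr ?_⟩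
    rwa [hsupp hC.1 hC.2]
  · rintro C D ⟨-, hC⟩ ⟨-, hD⟩ h
    rw [ConnectedComponent.notMem_pair_iff] at hC hD
    rw [← ConnectedComponent.supp_inj, ← hsupp hC.1 hC.2, ← hsupp hD.1 hD.2, h]
  · rintro D ⟨hP, hD⟩
    induction D using ConnectedComponent.ind with | h u => ?_
    rw [ConnectedComponent.notMem_pair_iff] at hD
    have hsub := ConnectedComponent.supp_subset_supp_map_ofLE (G.deleteEdges_le {s(x, y)})
      ((G.deleteEdges {s(x, y)}).connectedComponentMk u)
    have hx : x ∉ ((G.deleteEdges {s(x, y)}).connectedComponentMk u).supp := fun h => hD.1 (hsub h)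
    have hy : y ∉ ((G.deleteEdges {s(x, y)}).connectedComponentMk u).supp := fun h => hD.2 (hsub h)
    exact ⟨_, ⟨(map_ofLE_deleteEdges_mem_componentsWith_iff P hx hy).mp hP,
      ConnectedComponent.notMem_pair_iff.mpr ⟨hx, hy⟩⟩, rfl⟩

theorem ncard_componentsWith_le_deleteEdges_add_one (h : G.Adj x y) :
    (G.componentsWith P).ncard ≤ ((G.deleteEdges {s(x, y)}).componentsWith P).ncard + 1 := by
  have hxy : G.connectedComponentMk x = G.connectedComponentMk y :=
    ConnectedComponent.eq.mpr h.reachable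
  calc (G.componentsWith P).ncard
      ≤ (G.componentsWith P \ {G.connectedComponentMk x, G.connectedComponentMk y}).ncard +
          ({G.connectedComponentMk x, G.connectedComponentMk y} : Set _).ncard :=
        Set.ncard_le_ncard_sdiff_add_ncard _ _
    _ ≤ ((G.deleteEdges {s(x, y)}).componentsWith P).ncard + 1 := by
        rw [← ncard_componentsWith_deleteEdges_sdiff, hxy, Set.pair_eq_singleton,
          Set.ncard_singleton]
        exact Nat.add_le_add_right (Set.ncard_sdiff_le_of_finite _ (Set.toFinite _)) 1

theorem ncard_componentsWith_deleteEdges_le_add_two :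
    ((G.deleteEdges {s(x, y)}).componentsWith P).ncard ≤ (G.componentsWith P).ncard + 2 := by
  set H := G.deleteEdges {s(x, y)}
  calc (H.componentsWith P).ncard
      ≤ (H.componentsWith P \ {H.connectedComponentMk x, H.connectedComponentMk y}).ncard +
          ({H.connectedComponentMk x, H.connectedComponentMk y} : Set _).ncard :=
        Set.ncard_le_ncard_sdiff_add_ncard _ _
    _ ≤ (G.componentsWith P).ncard + 2 := by
        rw [ncard_componentsWith_deleteEdges_sdiff]
        exact add_le_add (Set.ncard_sdiff_le_of_finite _ (Set.toFinite _)) (Set.ncard_pair_le _ _)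

end SimpleGraph

theorem stmt17_general {V : Type*} (G : SimpleGraph V)
    (e : Sym2 V) (he : e ∈ G.edgeSet) :
    sunCount G ≤ sunCount (G.deleteEdges {e}) + 1 ∧
    sunCount (G.deleteEdges {e}) ≤ sunCount G + 2 := by
  induction e using Sym2.ind with
  | _ x y =>
  exact ⟨ncard_componentsWith_le_deleteEdges_add_one (fun _ H => IsSunGraph H) he,
    ncard_componentsWith_deleteEdges_le_add_two (fun _ H => IsSunGraph H)⟩

/-- `sun(G−e) + 1 ≥ sun(G) ≥ sun(G−e) − 2` for any edge `e` of `G`. -/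
theorem stmt17 {V : Type*} [Fintype V] (G : SimpleGraph V)
    (e : Sym2 V) (he : e ∈ G.edgeSet) :
    sunCount G ≤ sunCount (G.deleteEdges {e}) + 1 ∧
    sunCount (G.deleteEdges {e}) ≤ sunCount G + 2 :=
  stmt17_general G e he
end
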